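/- Let T ≥ 2 and let G_T : ℝ^T → ℝ be as in the lower-bound construction. For x ∈ ℝ^T, let prog_{9/10}(x) := max{i ∈ {0,…,T} : |x_i| > 9/10} with the convention x₀ := 1. If prog_{9/10}(x) < T − 1, then the smallest eigenvalue of the Hessian of G_T at x satisfies λ_min(∇²G_T(x)) ≤ −1/2. -/

import Mathlib

/-! Write `G_T` as a sum of link terms `Ψ(-a)Λ(-b) + Ψ(a)Λ(b)` in consecutive coordinates
`(a, b)`; the first term is the case `a = x₀ = 1`, because `Ψ(-1) = 0`. Let `j` be the coordinate
right after position `prog_{9/10}(x)`, so that `|x_j| ≤ 9/10` while the coordinate `a` before it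
has `|a| > 9/10`. The Rayleigh quotient of the Hessian at `e_j` is the second derivative of
`t ↦ G_T(x + t e_j)`, to which only two link terms contribute: the one with `b = x_j` gives
`(Ψ(-a) + Ψ(a)) Λ''(x_j) ≤ Ψ(9/10) · 8(0.81 - 1) e^{-0.405} < -1/2`, and the one with `a = x_j`
gives `Ψ''(-x_j)Λ(·) + Ψ''(x_j)Λ(·) ≤ 0`, since `Λ ≤ 0` and `Ψ'' ≥ 0` on `(-∞, 9/10]`.

The Hessian exists because `Ψ` is smooth: the derivative of `Ψ(x) / (2x - 1)ⁿ` is a combination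
of the same functions for `n + 1` and `n + 3`, so induction on the order applies. -/

open scoped RealInnerProductSpace

/-- The bump-like component function `Ψ` of the hard-instance construction. -/
noncomputable def Psi (x : ℝ) : ℝ :=
  if 1 / 2 < x then Real.exp (1 - 1 / (2 * x - 1) ^ 2) else 0

/-- The component function `Λ` of the hard-instance construction. -/
noncomputable def Lam (x : ℝ) : ℝ := 8 * (Real.exp (-x ^ 2 / 2) - 1)

/-- The hard instance `G_T(x) = Ψ(1)Λ(x₁) + ∑_{i=2}^T [Ψ(-x_{i-1})Λ(-x_i) + Ψ(x_{i-1})Λ(x_i)]`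
(coordinates are `0`-indexed in Lean: mathematical `x_i` is Lean's `x ⟨i-1, _⟩`). -/
noncomputable def G (T : ℕ) (x : EuclideanSpace ℝ (Fin T)) : ℝ :=
  ∑ i : Fin T,
    if (i : ℕ) = 0 then Psi 1 * Lam (x i)
    else
      Psi (-(x ⟨(i : ℕ) - 1, Nat.lt_of_le_of_lt (Nat.sub_le _ _) i.isLt⟩)) * Lam (-(x i)) +
        Psi (x ⟨(i : ℕ) - 1, Nat.lt_of_le_of_lt (Nat.sub_le _ _) i.isLt⟩) * Lam (x i)

/-- `prog_α(x) = max{i ∈ {0,…,T} : |x_i| > α}` with the convention `x₀ := 1`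
(mathematical index `i` corresponds to the Lean coordinate `j : Fin T` with `j + 1 = i`). -/
noncomputable def prog {T : ℕ} (α : ℝ) (x : EuclideanSpace ℝ (Fin T)) : ℕ :=
  sSup {i : ℕ | i = 0 ∨ ∃ j : Fin T, (j : ℕ) + 1 = i ∧ α < |x j|}

/-- The smallest eigenvalue of a (self-adjoint) operator on `ℝ^T`, as the infimum of the
Rayleigh quotient over the unit sphere. -/
noncomputable def lambdaMin {T : ℕ}
    (A : EuclideanSpace ℝ (Fin T) →L[ℝ] EuclideanSpace ℝ (Fin T)) : ℝ :=
  ⨅ u : {v : EuclideanSpace ℝ (Fin T) // ‖v‖ = 1}, ⟪u.1, A u.1⟫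

open Filter Topology
open scoped ContDiff

lemma tendsto_pow_mul_exp_neg_sq_atTop (n : ℕ) :
    Tendsto (fun u : ℝ => u ^ n * Real.exp (-u ^ 2)) atTop (𝓝 0) := by
  refine squeeze_zero' ?_ ?_
    ((Real.tendsto_pow_mul_exp_neg_atTop_nhds_zero n).comp (tendsto_pow_atTop two_ne_zero))
  · filter_upwards [eventually_ge_atTop 0] with u hu
    positivity
  · filter_upwards [eventually_ge_atTop 1] with u hu
    dsimp only [Function.comp]
    gcongr
    nlinarith

lemma inner_fderiv_gradient_eq_of_hasDerivAt_deriv {E : Type*} [NormedAddCommGroup E]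
    [InnerProductSpace ℝ E] [CompleteSpace E] {f : E → ℝ} (hf : ContDiff ℝ 2 f) {x v : E} {c : ℝ}
    (h : HasDerivAt (deriv fun t : ℝ => f (x + t • v)) c 0) :
    ⟪v, fderiv ℝ (gradient f) x v⟫ = c := by
  have hline (t : ℝ) : HasDerivAt (fun s : ℝ => x + s • v) v t := by
    simpa using ((hasDerivAt_id t).smul_const v).const_add x
  have hderiv : deriv (fun t : ℝ => f (x + t • v)) = fun t => ⟪v, gradient f (x + t • v)⟫ := by
    ext t
    have hd : HasDerivAt (fun t : ℝ => f (x + t • v)) (fderiv ℝ f (x + t • v) v) t :=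
      (hf.differentiable (by simp) _).hasFDerivAt.comp_hasDerivAt t (hline t)
    rw [hd.deriv, ← inner_gradient_left, real_inner_comm]
  have hgrad : Differentiable ℝ (gradient f) :=
    ((InnerProductSpace.toDual ℝ E).symm.contDiff.comp
      (hf.fderiv_right (m := 1) le_rfl)).differentiable one_ne_zero
  rw [hderiv] at h
  have h' := (hasDerivAt_const (0 : ℝ) v).inner ℝ
    ((hgrad (x + (0 : ℝ) • v)).hasFDerivAt.comp_hasDerivAt 0 (hline 0))
  rw [zero_smul, add_zero, inner_zero_left, add_zero] at h'
  exact (h.unique h').symm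

section SecondDerivativeAlongLines

variable {P P' P'' Q Q' Q'' : ℝ → ℝ}

lemma hasDerivAt_comp_neg (hP : ∀ s, HasDerivAt P (P' s) s) (s : ℝ) :
    HasDerivAt (fun s => P (-s)) (-P' (-s)) s :=
  ((hP (-s)).comp s (hasDerivAt_neg s)).congr_deriv (mul_neg_one _)

lemma hasDerivAt_comp_affine (hP : ∀ s, HasDerivAt P (P' s) s) (a α t : ℝ) :
    HasDerivAt (fun t => P (a + t * α)) (P' (a + t * α) * α) t :=
  (hP _).comp t <| by simpa using ((hasDerivAt_id t).mul_const α).const_add a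

lemma hasDerivAt_deriv_mul_comp_affine (hP : ∀ s, HasDerivAt P (P' s) s)
    (hP' : ∀ s, HasDerivAt P' (P'' s) s) (hQ : ∀ s, HasDerivAt Q (Q' s) s)
    (hQ' : ∀ s, HasDerivAt Q' (Q'' s) s) (a b α β : ℝ) :
    HasDerivAt (deriv fun t => P (a + t * α) * Q (b + t * β))
      (α ^ 2 * P'' a * Q b + 2 * α * β * P' a * Q' b + β ^ 2 * P a * Q'' b) 0 := by
  have hd : deriv (fun t => P (a + t * α) * Q (b + t * β)) = fun t =>
      P' (a + t * α) * α * Q (b + t * β) + P (a + t * α) * (Q' (b + t * β) * β) :=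
    funext fun t => ((hasDerivAt_comp_affine hP a α t).mul (hasDerivAt_comp_affine hQ b β t)).deriv
  rw [hd]
  refine ((((hasDerivAt_comp_affine hP' a α 0).mul_const α).mul
    (hasDerivAt_comp_affine hQ b β 0)).add ((hasDerivAt_comp_affine hP a α 0).mul
      ((hasDerivAt_comp_affine hQ' b β 0).mul_const β))).congr_deriv ?_
  simp only [zero_mul, add_zero]
  ring

end SecondDerivativeAlongLines

noncomputable def psiInvPow (n : ℕ) (x : ℝ) : ℝ := Psi x / (2 * x - 1) ^ n

lemma psiInvPow_of_le {n : ℕ} {x : ℝ} (hx : x ≤ 1 / 2) : psiInvPow n x = 0 := by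
  rw [psiInvPow, Psi, if_neg hx.not_gt, zero_div]

lemma psiInvPow_of_gt {n : ℕ} {x : ℝ} (hx : 1 / 2 < x) :
    psiInvPow n x = Real.exp 1 * ((2 * x - 1)⁻¹ ^ n * Real.exp (-(2 * x - 1)⁻¹ ^ 2)) := by
  rw [psiInvPow, Psi, if_pos hx, one_div, ← inv_pow, sub_eq_add_neg, Real.exp_add]
  ring

lemma tendsto_psiInvPow_nhds_half (n : ℕ) : Tendsto (psiInvPow n) (𝓝 (1 / 2)) (𝓝 0) := by
  rw [← nhdsLE_sup_nhdsGT, tendsto_sup]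
  constructor
  · exact tendsto_const_nhds.congr' <| eventuallyEq_nhdsWithin_of_eqOn
      fun y hy => (psiInvPow_of_le hy).symm
  · have hs : Tendsto (fun y : ℝ => 2 * y - 1) (𝓝[>] (1 / 2)) (𝓝[>] 0) := by
      refine tendsto_nhdsWithin_of_tendsto_nhds_of_eventually_within _ ?_ ?_
      · exact (Continuous.tendsto (by fun_prop) _).mono_left nhdsWithin_le_nhds |>.trans
          (by norm_num)
      · filter_upwards [self_mem_nhdsWithin] with y (hy : 1 / 2 < y)
        simp only [Set.mem_Ioi]
        linarith
    have := ((tendsto_pow_mul_exp_neg_sq_atTop n).comp (tendsto_inv_nhdsGT_zero.comp hs)).const_mul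
      (Real.exp 1)
    rw [mul_zero] at this
    exact this.congr' <| eventuallyEq_nhdsWithin_of_eqOn fun y hy => (psiInvPow_of_gt hy).symm

lemma slope_psiInvPow_half (n : ℕ) :
    slope (psiInvPow n) (1 / 2) = fun y => 2 * psiInvPow (n + 1) y := by
  ext y
  rw [slope_def_field, psiInvPow_of_le le_rfl, sub_zero, psiInvPow,
    psiInvPow, pow_succ, show y - 1 / 2 = (2 * y - 1) / 2 by ring]
  field_simp

lemma hasDerivAt_psiInvPow (n : ℕ) (x : ℝ) :
    HasDerivAt (psiInvPow n) (4 * psiInvPow (n + 3) x - 2 * n * psiInvPow (n + 1) x) x := by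
  rcases lt_trichotomy x (1 / 2) with hx | rfl | hx
  · rw [psiInvPow_of_le hx.le, psiInvPow_of_le hx.le, mul_zero, mul_zero, sub_zero]
    exact (hasDerivAt_const x 0).congr_of_eventuallyEq <|
      (eventually_le_nhds hx).mono fun y hy => psiInvPow_of_le hy
  · rw [psiInvPow_of_le le_rfl, psiInvPow_of_le le_rfl, mul_zero, mul_zero, sub_zero,
      hasDerivAt_iff_tendsto_slope, slope_psiInvPow_half]
    simpa using ((tendsto_psiInvPow_nhds_half _).mono_left nhdsWithin_le_nhds).const_mul 2
  · have hs : 2 * x - 1 ≠ 0 := by linarith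
    have hlin : HasDerivAt (fun y : ℝ => 2 * y - 1) 2 x := by
      simpa using ((hasDerivAt_id x).const_mul 2).sub_const 1
    have hPsi : Psi =ᶠ[𝓝 x] fun y => Real.exp (1 - ((2 * y - 1) ^ 2)⁻¹) :=
      (eventually_gt_nhds hx).mono fun y hy => by rw [Psi, if_pos hy, one_div]
    have h := (((hlin.fun_pow 2).fun_inv (pow_ne_zero 2 hs)).const_sub 1).exp.congr_of_eventuallyEq
      hPsi |>.div (hlin.fun_pow n) (pow_ne_zero n hs)
    refine h.congr_deriv ?_
    simp only [psiInvPow, hPsi.eq_of_nhds]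
    generalize Real.exp _ = E
    obtain _ | m := n
    · field_simp
      ring
    · simp only [Nat.add_sub_cancel]
      field_simp
      ring

lemma contDiff_psiInvPow (k : ℕ) : ∀ n, ContDiff ℝ k (psiInvPow n) := by
  induction k with
  | zero => exact fun n => contDiff_zero.2 <| continuous_iff_continuousAt.2 fun x =>
      (hasDerivAt_psiInvPow n x).continuousAt
  | succ k ih =>
    intro n
    rw [Nat.cast_succ, contDiff_succ_iff_deriv]
    refine ⟨fun x => (hasDerivAt_psiInvPow n x).differentiableAt, by simp, ?_⟩
    rw [show deriv (psiInvPow n) = _ from funext fun x => (hasDerivAt_psiInvPow n x).deriv]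
    exact ((ih _).const_smul (4 : ℝ)).sub ((ih _).const_smul (2 * n : ℝ))

lemma psiInvPow_zero : psiInvPow 0 = Psi := by
  ext x
  simp [psiInvPow]

@[fun_prop]
lemma contDiff_Psi : ContDiff ℝ ∞ Psi :=
  psiInvPow_zero ▸ contDiff_infty.2 fun k => contDiff_psiInvPow k 0

@[fun_prop]
lemma contDiff_Lam : ContDiff ℝ ∞ Lam := by
  unfold Lam
  fun_prop

@[fun_prop]
lemma differentiable_Psi : Differentiable ℝ Psi :=
  contDiff_Psi.differentiable (by simp)

@[fun_prop]
lemma differentiable_Lam : Differentiable ℝ Lam :=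
  contDiff_Lam.differentiable (by simp)

noncomputable def dPsi (x : ℝ) : ℝ := 4 * psiInvPow 3 x

noncomputable def d2Psi (x : ℝ) : ℝ := 16 * psiInvPow 6 x - 24 * psiInvPow 4 x

noncomputable def dLam (x : ℝ) : ℝ := -8 * x * Real.exp (-x ^ 2 / 2)

noncomputable def d2Lam (x : ℝ) : ℝ := 8 * (x ^ 2 - 1) * Real.exp (-x ^ 2 / 2)

lemma hasDerivAt_Psi (x : ℝ) : HasDerivAt Psi (dPsi x) x := by
  simpa [psiInvPow_zero, dPsi] using hasDerivAt_psiInvPow 0 x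

lemma hasDerivAt_dPsi (x : ℝ) : HasDerivAt dPsi (d2Psi x) x := by
  refine ((hasDerivAt_psiInvPow 3 x).const_mul 4).congr_deriv ?_
  simp only [d2Psi]
  push_cast
  ring

lemma hasDerivAt_neg_sq_div_two (x : ℝ) : HasDerivAt (fun y : ℝ => -y ^ 2 / 2) (-x) x := by
  refine ((hasDerivAt_pow 2 x).neg.div_const 2).congr_deriv ?_
  ring

lemma hasDerivAt_Lam (x : ℝ) : HasDerivAt Lam (dLam x) x := by
  refine (((hasDerivAt_neg_sq_div_two x).exp.sub_const 1).const_mul 8).congr_deriv ?_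
  simp only [dLam]
  ring

lemma hasDerivAt_dLam (x : ℝ) : HasDerivAt dLam (d2Lam x) x := by
  refine (((hasDerivAt_id x).const_mul (-8)).mul (hasDerivAt_neg_sq_div_two x).exp).congr_deriv ?_
  simp only [d2Lam, id]
  ring

lemma Psi_nonneg (x : ℝ) : 0 ≤ Psi x := by
  unfold Psi
  split_ifs <;> positivity

lemma Psi_neg_one : Psi (-1) = 0 := by
  norm_num [Psi]

lemma Psi_nine_tenths : Psi (9 / 10) = Real.exp (-(9 / 16)) := by
  norm_num [Psi]

lemma Psi_le_Psi {a b : ℝ} (ha : 1 / 2 < a) (hab : a ≤ b) : Psi a ≤ Psi b := by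
  rw [Psi, Psi, if_pos ha, if_pos (ha.trans_le hab), Real.exp_le_exp, sub_le_sub_iff_left]
  have : 0 < 2 * a - 1 := by linarith
  gcongr

lemma Psi_nine_tenths_le {a : ℝ} (ha : 9 / 10 < |a|) : Psi (9 / 10) ≤ Psi (-a) + Psi a := by
  rcases lt_abs.1 ha with h | h
  · linarith [Psi_le_Psi (by norm_num) h.le, Psi_nonneg (-a)]
  · linarith [Psi_le_Psi (by norm_num) h.le, Psi_nonneg a]

lemma d2Psi_nonneg {x : ℝ} (hx : x ≤ 9 / 10) : 0 ≤ d2Psi x := by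
  rcases le_or_gt x (1 / 2) with h | h
  · simp [d2Psi, psiInvPow_of_le h]
  · have hs : 0 < 2 * x - 1 := by linarith
    have hd : d2Psi x = Psi x / (2 * x - 1) ^ 6 * (16 - 24 * (2 * x - 1) ^ 2) := by
      rw [d2Psi, psiInvPow, psiInvPow]
      field_simp
    rw [hd]
    exact mul_nonneg (div_nonneg (Psi_nonneg x) (by positivity)) (by nlinarith)

lemma Lam_nonpos (x : ℝ) : Lam x ≤ 0 := by
  have : Real.exp (-x ^ 2 / 2) ≤ 1 := Real.exp_le_one_iff.2 (by nlinarith)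
  unfold Lam
  linarith

lemma d2Lam_neg (x : ℝ) : d2Lam (-x) = d2Lam x := by
  simp [d2Lam]

lemma d2Lam_le {x : ℝ} (hx : |x| ≤ 9 / 10) : d2Lam x ≤ -(38 / 25) * Real.exp (-(81 / 200)) := by
  have hx2 : x ^ 2 ≤ 81 / 100 := by nlinarith [abs_le.1 hx, sq_abs x]
  have he : Real.exp (-(81 / 200)) ≤ Real.exp (-x ^ 2 / 2) := Real.exp_le_exp.2 (by linarith)
  unfold d2Lam
  nlinarith [Real.exp_pos (-(81 / 200))]

lemma Psi_nine_tenths_mul_d2Lam_bound_le :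
    Psi (9 / 10) * (-(38 / 25) * Real.exp (-(81 / 200))) ≤ -(1 / 2) := by
  have h : Real.exp (387 / 400) ≤ 76 / 25 := by
    linarith [Real.exp_le_exp.2 (show (387 / 400 : ℝ) ≤ 1 by norm_num), Real.exp_one_lt_d9]
  rw [Psi_nine_tenths, mul_left_comm, ← Real.exp_add]
  have := Real.exp_pos (-(9 / 16) + -(81 / 200))
  have hinv : Real.exp (-(9 / 16) + -(81 / 200)) * Real.exp (387 / 400) = 1 := by
    rw [← Real.exp_add]; norm_num
  nlinarith

noncomputable def link (a b : ℝ) : ℝ := Psi (-a) * Lam (-b) + Psi a * Lam b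

noncomputable def linkHess (a b α β : ℝ) : ℝ :=
  α ^ 2 * (d2Psi (-a) * Lam (-b) + d2Psi a * Lam b) +
    2 * α * β * (dPsi (-a) * dLam (-b) + dPsi a * dLam b) +
    β ^ 2 * (Psi (-a) * d2Lam (-b) + Psi a * d2Lam b)

lemma hasDerivAt_deriv_link_comp_affine (a b α β : ℝ) :
    HasDerivAt (deriv fun t => link (a + t * α) (b + t * β)) (linkHess a b α β) 0 := by
  have hsplit : deriv (fun t => link (a + t * α) (b + t * β)) = fun t =>
      deriv (fun t => Psi (-(a + t * α)) * Lam (-(b + t * β))) t +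
        deriv (fun t => Psi (a + t * α) * Lam (b + t * β)) t :=
    funext fun t => deriv_add (by fun_prop) (by fun_prop)
  rw [hsplit]
  refine ((hasDerivAt_deriv_mul_comp_affine (hasDerivAt_comp_neg hasDerivAt_Psi)
    (fun s => (hasDerivAt_comp_neg hasDerivAt_dPsi s).neg.congr_deriv (neg_neg _))
    (hasDerivAt_comp_neg hasDerivAt_Lam)
    (fun s => (hasDerivAt_comp_neg hasDerivAt_dLam s).neg.congr_deriv (neg_neg _)) a b α β).add
    (hasDerivAt_deriv_mul_comp_affine hasDerivAt_Psi hasDerivAt_dPsi hasDerivAt_Lam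
    hasDerivAt_dLam a b α β)).congr_deriv ?_
  simp only [linkHess]
  ring

lemma linkHess_zero_one_le {a b : ℝ} (ha : 9 / 10 < |a|) (hb : |b| ≤ 9 / 10) :
    linkHess a b 0 1 ≤ -(1 / 2) := by
  have hS := Psi_nine_tenths_le ha
  have hd := d2Lam_le hb
  have hd0 : d2Lam b ≤ 0 := hd.trans (by nlinarith [Real.exp_pos (-(81 / 200))])
  have h := Psi_nine_tenths_mul_d2Lam_bound_le
  have hP := Psi_nonneg (9 / 10)
  simp only [linkHess, d2Lam_neg]
  nlinarith

lemma linkHess_right_zero_nonpos {a : ℝ} (b α : ℝ) (ha : |a| ≤ 9 / 10) :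
    linkHess a b α 0 ≤ 0 := by
  have h₁ := d2Psi_nonneg (neg_le.1 (abs_le.1 ha).1)
  have h₂ := d2Psi_nonneg (abs_le.1 ha).2
  have h₃ := Lam_nonpos (-b)
  have h₄ := Lam_nonpos b
  simp only [linkHess]
  have : d2Psi (-a) * Lam (-b) + d2Psi a * Lam b ≤ 0 := by nlinarith
  nlinarith [sq_nonneg α]

-- `c` replaces the missing coordinate before `y 0`: the paper's `x₀ := 1`, or `0` for directions.
noncomputable def prevCoord {T : ℕ} (c : ℝ) (y : EuclideanSpace ℝ (Fin T)) (i : Fin T) : ℝ :=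
  if (i : ℕ) = 0 then c else y ⟨(i : ℕ) - 1, Nat.lt_of_le_of_lt (Nat.sub_le _ _) i.isLt⟩

lemma G_eq_sum_link (T : ℕ) (y : EuclideanSpace ℝ (Fin T)) :
    G T y = ∑ i, link (prevCoord 1 y i) (y i) := by
  refine Finset.sum_congr rfl fun i _ => ?_
  by_cases h : (i : ℕ) = 0 <;> simp [prevCoord, link, h, Psi_neg_one]

lemma prevCoord_add_smul {T : ℕ} (c : ℝ) (x v : EuclideanSpace ℝ (Fin T)) (t : ℝ) (i : Fin T) :
    prevCoord c (x + t • v) i = prevCoord c x i + t * prevCoord 0 v i := by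
  unfold prevCoord
  split_ifs <;> simp

lemma prevCoord_zero_single {T : ℕ} (j i : Fin T) :
    prevCoord 0 (EuclideanSpace.single j (1 : ℝ)) i = if (i : ℕ) = j + 1 then 1 else 0 := by
  unfold prevCoord
  split_ifs with h0 h1 h1 <;> simp [Fin.ext_iff] <;> omega

lemma contDiff_G (T : ℕ) : ContDiff ℝ ∞ (G T) := by
  have hprev (i : Fin T) : ContDiff ℝ ∞ fun y : EuclideanSpace ℝ (Fin T) => prevCoord 1 y i := by
    unfold prevCoord
    split_ifs <;> fun_prop
  rw [show G T = _ from funext (G_eq_sum_link T)]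
  unfold link
  fun_prop

lemma hasDerivAt_deriv_G_comp_line (T : ℕ) (x v : EuclideanSpace ℝ (Fin T)) :
    HasDerivAt (deriv fun t : ℝ => G T (x + t • v))
      (∑ i, linkHess (prevCoord 1 x i) (x i) (prevCoord 0 v i) (v i)) 0 := by
  have h : deriv (fun t : ℝ => G T (x + t • v)) = fun t => ∑ i,
      deriv (fun t => link (prevCoord 1 x i + t * prevCoord 0 v i) (x i + t * v i)) t := by
    ext t
    simp only [G_eq_sum_link, prevCoord_add_smul, PiLp.add_apply, PiLp.smul_apply, smul_eq_mul]
    exact deriv_fun_sum fun i _ => by unfold link; fun_prop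
  rw [h]
  exact HasDerivAt.fun_sum fun i _ => hasDerivAt_deriv_link_comp_affine _ _ _ _

lemma inner_single_hessian_G_le (T : ℕ) (x : EuclideanSpace ℝ (Fin T)) (j : Fin T)
    (hprev : 9 / 10 < |prevCoord 1 x j|) (hj : |x j| ≤ 9 / 10) :
    ⟪EuclideanSpace.single j 1, fderiv ℝ (gradient (G T)) x (EuclideanSpace.single j 1)⟫ ≤
      -(1 / 2) := by
  rw [inner_fderiv_gradient_eq_of_hasDerivAt_deriv
    ((contDiff_G T).of_le (WithTop.coe_le_coe.2 le_top)) (hasDerivAt_deriv_G_comp_line T x _)]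
  calc _ ≤ ∑ i : Fin T, if i = j then -(1 / 2 : ℝ) else 0 := Finset.sum_le_sum fun i _ => ?_
    _ = -(1 / 2) := by rw [Finset.sum_ite_eq']; simp
  rw [prevCoord_zero_single, PiLp.single_apply]
  split_ifs with hnext hij hij
  · simp [hij] at hnext
  · have : prevCoord 1 x i = x j := by
      have hidx : (⟨(i : ℕ) - 1, by omega⟩ : Fin T) = j := Fin.ext (by simp only; omega)
      rw [prevCoord, if_neg (by omega), hidx]
    exact this ▸ linkHess_right_zero_nonpos _ _ hj
  · subst hij
    exact linkHess_zero_one_le hprev hj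
  · simp [linkHess]

section Progress

variable {T : ℕ} {α : ℝ} {x : EuclideanSpace ℝ (Fin T)}

lemma bddAbove_prog_set :
    BddAbove {i : ℕ | i = 0 ∨ ∃ j : Fin T, (j : ℕ) + 1 = i ∧ α < |x j|} := by
  refine ⟨T, ?_⟩
  rintro i (rfl | ⟨j, rfl, -⟩)
  · exact Nat.zero_le T
  · exact j.isLt

lemma abs_le_of_prog_le {j : Fin T} (h : prog α x ≤ j) : |x j| ≤ α := by
  by_contra! hj
  have := le_csSup bddAbove_prog_set (Or.inr ⟨j, rfl, hj⟩ :
    (j : ℕ) + 1 ∈ {i : ℕ | i = 0 ∨ ∃ j : Fin T, (j : ℕ) + 1 = i ∧ α < |x j|})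
  rw [← prog] at this
  omega

lemma lt_abs_prevCoord_of_prog_eq (hα : α < 1) {j : Fin T} (h : (j : ℕ) = prog α x) :
    α < |prevCoord 1 x j| := by
  obtain h0 | ⟨k, hk, hlt⟩ := Nat.sSup_mem ⟨0, Or.inl rfl⟩ bddAbove_prog_set (s :=
    {i : ℕ | i = 0 ∨ ∃ j : Fin T, (j : ℕ) + 1 = i ∧ α < |x j|})
  · rw [prevCoord, if_pos (h.trans h0)]
    simpa using hα
  · have hidx : (⟨(j : ℕ) - 1, by omega⟩ : Fin T) = k := Fin.ext (by
      simp only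
      rw [h, prog]
      omega)
    rw [prevCoord, if_neg (by rw [h, prog]; omega), hidx]
    exact hlt

end Progress

lemma lambdaMin_le_inner {T : ℕ}
    (A : EuclideanSpace ℝ (Fin T) →L[ℝ] EuclideanSpace ℝ (Fin T))
    (e : EuclideanSpace ℝ (Fin T)) (he : ‖e‖ = 1) : lambdaMin A ≤ ⟪e, A e⟫ := by
  refine ciInf_le ⟨-‖A‖, ?_⟩ (⟨e, he⟩ : {v : EuclideanSpace ℝ (Fin T) // ‖v‖ = 1})
  rintro _ ⟨u, rfl⟩
  refine neg_le_of_abs_le ((abs_real_inner_le_norm _ _).trans ?_)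
  simpa [u.2] using A.le_opNorm u.1

theorem stmt_13_general (T : ℕ) (x : EuclideanSpace ℝ (Fin T))
    (hx : prog (9 / 10) x < T - 1) :
    lambdaMin (fderiv ℝ (gradient (G T)) x) ≤ -(1 / 2) := by
  let j : Fin T := ⟨prog (9 / 10) x, by omega⟩
  calc lambdaMin (fderiv ℝ (gradient (G T)) x)
      ≤ ⟪EuclideanSpace.single j 1, fderiv ℝ (gradient (G T)) x (EuclideanSpace.single j 1)⟫ :=
        lambdaMin_le_inner _ _ (by simp)
    _ ≤ -(1 / 2) := inner_single_hessian_G_le T x j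
        (lt_abs_prevCoord_of_prog_eq (by norm_num) rfl) (abs_le_of_prog_le le_rfl)

/-- If `prog_{9/10}(x) < T - 1`, then the Hessian of `G_T` at `x` has an
eigenvalue at most `-1/2`. -/
theorem stmt_13 (T : ℕ) (hT : 2 ≤ T) (x : EuclideanSpace ℝ (Fin T))
    (hx : prog (9 / 10) x < T - 1) :
    lambdaMin (fderiv ℝ (gradient (G T)) x) ≤ -(1 / 2) :=
  stmt_13_general T x hx
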